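/- If u and v are real numbers with 2/3 ≤ u ≤ 1 ≤ v ≤ 3/2 and 1/u + 1/v ≥ 2, then v ≤ 1 + (5/4)·√(1 - u). -/

import Mathlib

/-! Put `s = √(1 - u)`, so that `u = 1 - s²`. If `s ≥ 2/5`, the bound `v ≤ 3/2` already suffices.
Otherwise `1/u + 1/v ≥ 2` clears to `(v - 1)(1 - 2s²) ≤ s²`, and since `1 - 2s² > 1/2` this gives
`v - 1 ≤ 2s² < (5/4) s`. -/

lemma two_mul_mul_le_add_of_two_le_inv_add_inv {u v : ℝ} (hu : 0 < u) (hv : 0 < v)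
    (h : 2 ≤ 1 / u + 1 / v) : 2 * (u * v) ≤ u + v := by
  rw [div_add_div _ _ hu.ne' hv.ne', le_div_iff₀ (mul_pos hu hv)] at h
  linarith

lemma sub_one_le_two_mul_sq {s v : ℝ} (hs : s ^ 2 < 1 / 4) (h : (v - 1) * (1 - 2 * s ^ 2) ≤ s ^ 2) :
    v - 1 ≤ 2 * s ^ 2 := by
  rcases le_or_gt v 1 with hv | hv
  · nlinarith [sq_nonneg s]
  · nlinarith

theorem stmt_14 (u v : ℝ) (hu2 : u ≤ 1) (hv1 : 1 ≤ v) (hv2 : v ≤ 3/2)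
    (h : 1/u + 1/v ≥ 2) :
    v ≤ 1 + (5/4) * Real.sqrt (1 - u) := by
  set s := √(1 - u)
  have hs0 : 0 ≤ s := Real.sqrt_nonneg _
  have hu : u = 1 - s ^ 2 := by rw [Real.sq_sqrt (by linarith)]; ring
  rcases le_or_gt (2 / 5) s with hs | hs
  · linarith
  · have hmean := two_mul_mul_le_add_of_two_le_inv_add_inv (by nlinarith) (by linarith) h
    rw [hu] at hmean
    have hv := sub_one_le_two_mul_sq (s := s) (v := v) (by nlinarith) (by linear_combination hmean)
    nlinarith
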